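/- arXiv:2511.13662 — 8 statements merged into one kernel-verified Lean document; each statement's English description precedes it below -/
import Mathlib

section
/- Let v : E → {0,1} be a branch status and let π : V → {0,1} satisfy the energization constraints for v, namely: π(r) = 1; |π(o(e)) − π(d(e))| ≤ 1 − v(e) for every branch e; and π(i) ≤ Σ_{e∈κ} v(e) for every bus i and every cutset κ separating i from r. Then for every bus i, π(i) = 1 if and only if i is connected to r via closed branches. -/
/-!
A closed branch forces equal energization at its endpoints, so `π` is constant (equal to
`π r = 1`) on the closed-branch component of `r`. Conversely, if `i` is not connected to `r`,
the closed-branch component `S` of `i` avoids `r`, and every branch of the cutset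
`[S, V ∖ S]` is open; the cutset constraint then reads `π i ≤ 0`.
-/

namespace Energization

variable {V E : Type*} (o d : E → V) (v : E → ℝ)

def ClosedAdj (a b : V) : Prop :=
  ∃ e, v e = 1 ∧ ((o e = a ∧ d e = b) ∨ (o e = b ∧ d e = a))

instance : Std.Symm (ClosedAdj o d v) where
  symm _ _ := fun ⟨e, he, h⟩ => ⟨e, he, h.symm⟩

variable {o d v}

theorem eq_of_closedAdj {π : V → ℝ} (hedge : ∀ e, |π (o e) - π (d e)| ≤ 1 - v e) {a b : V}
    (hab : ClosedAdj o d v a b) : π a = π b := by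
  obtain ⟨e, he, hends⟩ := hab
  have h : π (o e) = π (d e) := by simpa [he, sub_eq_zero] using hedge e
  rcases hends with ⟨rfl, rfl⟩ | ⟨rfl, rfl⟩
  exacts [h, h.symm]

theorem eq_of_reflTransGen_closedAdj {π : V → ℝ}
    (hedge : ∀ e, |π (o e) - π (d e)| ≤ 1 - v e) {a b : V}
    (hab : Relation.ReflTransGen (ClosedAdj o d v) a b) : π a = π b :=
  Relation.reflTransGen_eq_self (r := @Eq ℝ) ▸
    hab.lift π fun _ _ => eq_of_closedAdj hedge

theorem cut_sum_eq_zero [Fintype E] [DecidableEq V] (hv : ∀ e, v e = 0 ∨ v e = 1)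
    {S : Finset V} (hS : ∀ a b, ClosedAdj o d v a b → a ∈ S → b ∈ S) :
    ∑ e ∈ Finset.univ.filter
      (fun e => (o e ∈ S ∧ d e ∉ S) ∨ (d e ∈ S ∧ o e ∉ S)), v e = 0 := by
  refine Finset.sum_eq_zero fun e he => (hv e).resolve_right fun hclosed => ?_
  rcases (Finset.mem_filter.mp he).2 with ⟨hin, hout⟩ | ⟨hin, hout⟩
  · exact hout (hS _ _ ⟨e, hclosed, .inl ⟨rfl, rfl⟩⟩ hin)
  · exact hout (hS _ _ ⟨e, hclosed, .inr ⟨rfl, rfl⟩⟩ hin)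

theorem exists_open_cut_of_not_reflTransGen [Fintype V] [Fintype E] [DecidableEq V]
    (hv : ∀ e, v e = 0 ∨ v e = 1) {r i : V}
    (hconn : ¬ Relation.ReflTransGen (ClosedAdj o d v) r i) :
    ∃ S : Finset V, i ∈ S ∧ r ∉ S ∧ ∑ e ∈ Finset.univ.filter
      (fun e => (o e ∈ S ∧ d e ∉ S) ∨ (d e ∈ S ∧ o e ∉ S)), v e = 0 := by
  classical
  refine ⟨Finset.univ.filter (Relation.ReflTransGen (ClosedAdj o d v) i),
    by simp [Relation.ReflTransGen.refl], by simpa using fun h => hconn (Std.Symm.symm _ _ h),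
    cut_sum_eq_zero hv ?_⟩
  intro a b hab ha
  simp only [Finset.mem_filter, Finset.mem_univ, true_and] at ha ⊢
  exact ha.tail hab

end Energization

theorem stmt_0_general {V E : Type*} [Fintype V] [Fintype E] [DecidableEq V]
    (o d : E → V) (r : V) (v : E → ℝ) (π : V → ℝ)
    (hv : ∀ e, v e = 0 ∨ v e = 1)
    (href : π r = 1)
    (hedge : ∀ e, |π (o e) - π (d e)| ≤ 1 - v e)
    (hcut : ∀ (i : V) (S : Finset V), i ∈ S → r ∉ S →
      π i ≤ ∑ e ∈ Finset.univ.filter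
        (fun e => (o e ∈ S ∧ d e ∉ S) ∨ (d e ∈ S ∧ o e ∉ S)), v e) :
    ∀ i : V, π i = 1 ↔
      Relation.ReflTransGen
        (fun a b => ∃ e, v e = 1 ∧ ((o e = a ∧ d e = b) ∨ (o e = b ∧ d e = a))) r i := by
  intro i
  constructor
  · intro hi
    by_contra hconn
    obtain ⟨S, hiS, hrS, hsum⟩ := Energization.exists_open_cut_of_not_reflTransGen hv hconn
    have hle := hcut i S hiS hrS
    linarith
  · intro hconn
    rw [← href]
    exact (Energization.eq_of_reflTransGen_closedAdj hedge hconn).symm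

/-- **Theorem 1 of the paper.** If the binary energization variables `π` satisfy the
reference constraint, the closed-branch equality constraints and the cutset constraints
for a binary branch status `v`, then `π i = 1` iff bus `i` is connected to the
reference bus `r` via closed branches. -/
theorem stmt_0 {V E : Type*} [Fintype V] [Fintype E] [DecidableEq V]
    (o d : E → V) (r : V) (v : E → ℝ) (π : V → ℝ)
    (hv : ∀ e, v e = 0 ∨ v e = 1)
    (hπbin : ∀ i, π i = 0 ∨ π i = 1)
    (href : π r = 1)
    (hedge : ∀ e, |π (o e) - π (d e)| ≤ 1 - v e)
    (hcut : ∀ (i : V) (S : Finset V), i ∈ S → r ∉ S →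
      π i ≤ ∑ e ∈ Finset.univ.filter
        (fun e => (o e ∈ S ∧ d e ∉ S) ∨ (d e ∈ S ∧ o e ∉ S)), v e) :
    ∀ i : V, π i = 1 ↔
      Relation.ReflTransGen
        (fun a b => ∃ e, v e = 1 ∧ ((o e = a ∧ d e = b) ∨ (o e = b ∧ d e = a))) r i :=
  stmt_0_general o d r v π hv href hedge hcut
end

section
/- Let v : E → {0,1} be a branch status and let π : V → [0,1] be a real-valued function satisfying the energization constraints for v, namely: π(r) = 1; |π(o(e)) − π(d(e))| ≤ 1 − v(e) for every branch e; and π(i) ≤ Σ_{e∈κ} v(e) for every bus i and every cutset κ separating i from r. Then π takes only the values 0 and 1, i.e. π ∈ {0,1}^V. -/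
/-- **Theorem 2 of the paper.** If the relaxed energization variables `π : V → [0,1]`
satisfy the reference constraint, the closed-branch equality constraints and the cutset
constraints for a binary branch status `v`, then `π` only takes the values 0 and 1. -/
theorem stmt_1 {V E : Type*} [Fintype V] [Fintype E] [DecidableEq V]
    (o d : E → V) (r : V) (v : E → ℝ) (π : V → ℝ)
    (hv : ∀ e, v e = 0 ∨ v e = 1)
    (hπ01 : ∀ i, 0 ≤ π i ∧ π i ≤ 1)
    (href : π r = 1)
    (hedge : ∀ e, |π (o e) - π (d e)| ≤ 1 - v e)
    (hcut : ∀ (i : V) (S : Finset V), i ∈ S → r ∉ S →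
      π i ≤ ∑ e ∈ Finset.univ.filter
        (fun e => (o e ∈ S ∧ d e ∉ S) ∨ (d e ∈ S ∧ o e ∉ S)), v e) :
    ∀ i : V, π i = 0 ∨ π i = 1 := by
  classical
  intro i
  set rel : V → V → Prop := fun a b =>
    ∃ e, v e = 1 ∧ ((o e = a ∧ d e = b) ∨ (d e = a ∧ o e = b)) with hrel
  have hπrel : ∀ a b, rel a b → π a = π b := by
    rintro a b ⟨e, hve, h⟩
    have := hedge e
    rw [hve] at this
    have habs : |π (o e) - π (d e)| = 0 :=
      le_antisymm (by linarith) (abs_nonneg _)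
    have : π (o e) = π (d e) := by
      have := abs_eq_zero.mp habs; linarith
    rcases h with ⟨ha, hb⟩ | ⟨ha, hb⟩ <;> subst ha <;> subst hb <;> linarith
  set R : V → V → Prop := Relation.ReflTransGen rel with hR
  have hπR : ∀ a b, R a b → π a = π b := by
    intro a b h
    induction h with
    | refl => rfl
    | tail _ hr ih => exact ih.trans (hπrel _ _ hr)
  by_cases hir : R i r
  · right; rw [hπR _ _ hir, href]
  · left
    set S : Finset V := Finset.univ.filter (fun j => R i j) with hS
    have hiS : i ∈ S := by simp only [hS, Finset.mem_filter, Finset.mem_univ, true_and]; exact Relation.ReflTransGen.refl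
    have hrS : r ∉ S := by simp [hS, hir]
    have hle := hcut i S hiS hrS
    have hzero : ∀ e ∈ Finset.univ.filter
        (fun e => (o e ∈ S ∧ d e ∉ S) ∨ (d e ∈ S ∧ o e ∉ S)), v e = 0 := by
      intro e he
      rcases hv e with h0 | h1
      · exact h0
      · exfalso
        simp only [Finset.mem_filter, Finset.mem_univ, true_and, hS] at he
        rcases he with ⟨ho, hd⟩ | ⟨hd, ho⟩
        · exact hd (ho.tail ⟨e, h1, Or.inl ⟨rfl, rfl⟩⟩)
        · exact ho (hd.tail ⟨e, h1, Or.inr ⟨rfl, rfl⟩⟩)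
    rw [Finset.sum_eq_zero hzero] at hle
    exact le_antisymm hle (hπ01 i).1
end

section
/- Let v : E → {0,1} be a branch status and let π : V → [0,1] be a real-valued function satisfying: π(r) = 1; |π(o(e)) − π(d(e))| ≤ 1 − v(e) for every branch e; and π(i) ≤ Σ_{e∈κ} v(e) for every bus i and every cutset κ separating i from r. Then for every bus i, π(i) = 1 if i is connected to r via closed branches, and π(i) = 0 otherwise. -/
/-- Combining Theorems 1 and 2 of the paper: the relaxed energization variables
`π : V → [0,1]` satisfying the constraints take exactly the value of the
energization indicator. -/
theorem stmt_2 {V E : Type*} [Fintype V] [Fintype E] [DecidableEq V]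
    (o d : E → V) (r : V) (v : E → ℝ) (π : V → ℝ)
    (hv : ∀ e, v e = 0 ∨ v e = 1)
    (hπ01 : ∀ i, 0 ≤ π i ∧ π i ≤ 1)
    (href : π r = 1)
    (hedge : ∀ e, |π (o e) - π (d e)| ≤ 1 - v e)
    (hcut : ∀ (i : V) (S : Finset V), i ∈ S → r ∉ S →
      π i ≤ ∑ e ∈ Finset.univ.filter
        (fun e => (o e ∈ S ∧ d e ∉ S) ∨ (d e ∈ S ∧ o e ∉ S)), v e) :
    ∀ i : V,
      (Relation.ReflTransGen
        (fun a b => ∃ e, v e = 1 ∧ ((o e = a ∧ d e = b) ∨ (o e = b ∧ d e = a))) r i →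
        π i = 1) ∧
      (¬ Relation.ReflTransGen
        (fun a b => ∃ e, v e = 1 ∧ ((o e = a ∧ d e = b) ∨ (o e = b ∧ d e = a))) r i →
        π i = 0) := by
  classical
  set R : V → V → Prop :=
    fun a b => ∃ e, v e = 1 ∧ ((o e = a ∧ d e = b) ∨ (o e = b ∧ d e = a)) with hR
  have hstep : ∀ a b, R a b → π a = π b := by
    rintro a b ⟨e, hve, h⟩
    have h0 : |π (o e) - π (d e)| ≤ 0 := by
      have := hedge e; rw [hve] at this; linarith
    have : π (o e) = π (d e) := by
      have := abs_nonneg (π (o e) - π (d e))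
      have heq : |π (o e) - π (d e)| = 0 := le_antisymm h0 this
      have := abs_eq_zero.mp heq
      linarith
    rcases h with ⟨h1, h2⟩ | ⟨h1, h2⟩ <;> rw [← h1, ← h2] <;> [exact this; exact this.symm]
  intro i
  constructor
  · intro h
    induction h with
    | refl => exact href
    | tail _ h2 ih => rw [← hstep _ _ h2]; exact ih
  · intro h
    set S : Finset V := Finset.univ.filter (fun j => ¬ Relation.ReflTransGen R r j) with hS
    have hiS : i ∈ S := by simp [hS, h]
    have hrS : r ∉ S := by simp [hS]; exact Relation.ReflTransGen.refl
    have hle := hcut i S hiS hrS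
    have hsum : ∑ e ∈ Finset.univ.filter
        (fun e => (o e ∈ S ∧ d e ∉ S) ∨ (d e ∈ S ∧ o e ∉ S)), v e = 0 := by
      apply Finset.sum_eq_zero
      intro e he
      simp only [Finset.mem_filter, hS, Finset.mem_univ, true_and, not_not] at he
      rcases hv e with h0 | h1
      · exact h0
      · exfalso
        rcases he with ⟨hin, hout⟩ | ⟨hin, hout⟩
        · exact hin (hout.tail ⟨e, h1, Or.inr ⟨rfl, rfl⟩⟩)
        · exact hin (hout.tail ⟨e, h1, Or.inl ⟨rfl, rfl⟩⟩)
    rw [hsum] at hle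
    exact le_antisymm hle (hπ01 i).1
end

section
/- Let V be a finite set of buses with reference bus r, E a finite set of branches with endpoint maps o, d : E → V, and v : E → {0,1} a branch status. Define virtual injections δ : V → ℝ by δ(r) = 1 − |V| and δ(i) = 1 for i ≠ r. Then there exists a virtual flow f : E → ℝ satisfying, for every bus i, Σ_{e : d(e) = i} f(e) = δ(i) + Σ_{e : o(e) = i} f(e), and |f(e)| ≤ v(e)·|V| for every branch e, if and only if every bus is connected to r via closed branches. -/
set_option linter.unusedSectionVars false

namespace Stmt8Aux

variable {V E : Type*} [Fintype V] [Fintype E] [DecidableEq V] [DecidableEq E]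

/-- One closed-branch step. -/
def Step (o d : E → V) (v : E → ℝ) (a b : V) : Prop :=
  ∃ e, v e = 1 ∧ ((o e = a ∧ d e = b) ∨ (o e = b ∧ d e = a))

/-- Reachable from `r` in at most `n` steps. -/
def StepsN (o d : E → V) (r : V) (v : E → ℝ) : ℕ → V → Prop
  | 0, i => i = r
  | n + 1, i => StepsN o d r v n i ∨ ∃ j, StepsN o d r v n j ∧ Step o d v j i

lemma exists_stepsN {o d : E → V} {r : V} {v : E → ℝ} {i : V}
    (h : Relation.ReflTransGen (Step o d v) r i) : ∃ n, StepsN o d r v n i := by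
  induction h with
  | refl => exact ⟨0, rfl⟩
  | tail _ hbc ih =>
    obtain ⟨n, hn⟩ := ih
    exact ⟨n + 1, Or.inr ⟨_, hn, hbc⟩⟩

variable (o d : E → V) (r : V) (v : E → ℝ)

open Classical in
/-- Minimal number of steps from `r`. -/
noncomputable def depth (h : ∀ i, ∃ n, StepsN o d r v n i) (i : V) : ℕ :=
  Nat.find (h i)

open Classical in
lemma parent_exists (h : ∀ i, ∃ n, StepsN o d r v n i) {i : V} (hi : i ≠ r) :
    ∃ j e, depth o d r v h j < depth o d r v h i ∧ v e = 1 ∧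
      ((o e = j ∧ d e = i) ∨ (o e = i ∧ d e = j)) := by
  have hspec : StepsN o d r v (depth o d r v h i) i := Nat.find_spec (h i)
  have hne : depth o d r v h i ≠ 0 := by
    intro h0
    exact hi ((Nat.find_eq_zero (h i)).mp h0)
  obtain ⟨m, hm⟩ := Nat.exists_eq_succ_of_ne_zero hne
  rw [hm] at hspec
  rcases hspec with hsp | ⟨j, hj, e, hve, hor⟩
  · exfalso
    have : depth o d r v h i ≤ m := Nat.find_le hsp
    omega
  · refine ⟨j, e, ?_, hve, hor⟩
    have : depth o d r v h j ≤ m := Nat.find_le hj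
    omega

noncomputable def parent (h : ∀ i, ∃ n, StepsN o d r v n i) (i : V) (hi : i ≠ r) : V :=
  (parent_exists o d r v h hi).choose

noncomputable def pe (h : ∀ i, ∃ n, StepsN o d r v n i) (i : V) (hi : i ≠ r) : E :=
  (parent_exists o d r v h hi).choose_spec.choose

lemma pe_spec (h : ∀ i, ∃ n, StepsN o d r v n i) (i : V) (hi : i ≠ r) :
    depth o d r v h (parent o d r v h i hi) < depth o d r v h i ∧
      v (pe o d r v h i hi) = 1 ∧
      ((o (pe o d r v h i hi) = parent o d r v h i hi ∧ d (pe o d r v h i hi) = i) ∨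
        (o (pe o d r v h i hi) = i ∧ d (pe o d r v h i hi) = parent o d r v h i hi)) :=
  (parent_exists o d r v h hi).choose_spec.choose_spec

/-- Unit flow from `r` to `i` along chosen parent edges. -/
noncomputable def pathflow (h : ∀ i, ∃ n, StepsN o d r v n i) (i : V) : E → ℝ :=
  if hi : i = r then 0
  else fun e =>
    pathflow h (parent o d r v h i hi) e +
      (if e = pe o d r v h i hi then (if d (pe o d r v h i hi) = i then 1 else -1) else 0)
termination_by depth o d r v h i
decreasing_by exact (pe_spec o d r v h i hi).1

open Classical in
lemma depth_eq_zero (h : ∀ i, ∃ n, StepsN o d r v n i) {i : V}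
    (h0 : depth o d r v h i = 0) : i = r :=
  (Nat.find_eq_zero (h i)).mp h0

/-- Support of the pathflow: only chosen edges of vertices of smaller depth. -/
lemma pathflow_support (h : ∀ i, ∃ n, StepsN o d r v n i) :
    ∀ (n : ℕ) (i : V), depth o d r v h i ≤ n → ∀ e, pathflow o d r v h i e ≠ 0 →
      ∃ (j : V) (hj : j ≠ r), e = pe o d r v h j hj ∧
        depth o d r v h j ≤ depth o d r v h i := by
  intro n
  induction n with
  | zero =>
    intro i hdi e hne
    have hir : i = r := depth_eq_zero o d r v h (Nat.le_zero.mp hdi)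
    rw [pathflow, dif_pos hir] at hne
    simp at hne
  | succ n ih =>
    intro i hdi e hne
    by_cases hir : i = r
    · rw [pathflow, dif_pos hir] at hne
      simp at hne
    · rw [pathflow, dif_neg hir] at hne
      by_cases hepe : e = pe o d r v h i hir
      · exact ⟨i, hir, hepe, le_refl _⟩
      · rw [if_neg hepe, add_zero] at hne
        have hdp : depth o d r v h (parent o d r v h i hir) ≤ n := by
          have := (pe_spec o d r v h i hir).1
          omega
        obtain ⟨j, hj, hej, hdj⟩ := ih (parent o d r v h i hir) hdp e hne
        refine ⟨j, hj, hej, ?_⟩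
        have := (pe_spec o d r v h i hir).1
        omega

lemma pe_inj (h : ∀ i, ∃ n, StepsN o d r v n i) {i j : V} (hi : i ≠ r) (hj : j ≠ r)
    (hij : pe o d r v h i hi = pe o d r v h j hj) : i = j := by
  have si := pe_spec o d r v h i hi
  have sj := pe_spec o d r v h j hj
  rw [hij] at si
  rcases si.2.2 with ⟨ho1, hd1⟩ | ⟨ho1, hd1⟩ <;>
    rcases sj.2.2 with ⟨ho2, hd2⟩ | ⟨ho2, hd2⟩
  · exact hd1.symm.trans hd2
  · -- o e = parent i, d e = i ; o e = j, d e = parent j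
    exfalso
    have h1 : parent o d r v h i hi = j := ho1.symm.trans ho2
    have h2 : i = parent o d r v h j hj := hd1.symm.trans hd2
    have hlt1 := si.1
    have hlt2 := sj.1
    rw [h1] at hlt1
    rw [← h2] at hlt2
    omega
  · exfalso
    have h1 : i = parent o d r v h j hj := ho1.symm.trans ho2
    have h2 : parent o d r v h i hi = j := hd1.symm.trans hd2
    have hlt1 := si.1
    have hlt2 := sj.1
    rw [h2] at hlt1
    rw [← h1] at hlt2
    omega
  · exact ho1.symm.trans ho2

lemma pathflow_bound (h : ∀ i, ∃ n, StepsN o d r v n i) :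
    ∀ (n : ℕ) (i : V), depth o d r v h i ≤ n → ∀ e, |pathflow o d r v h i e| ≤ 1 := by
  intro n
  induction n with
  | zero =>
    intro i hdi e
    have hir : i = r := depth_eq_zero o d r v h (Nat.le_zero.mp hdi)
    rw [pathflow, dif_pos hir]
    simp
  | succ n ih =>
    intro i hdi e
    by_cases hir : i = r
    · rw [pathflow, dif_pos hir]; simp
    · rw [pathflow, dif_neg hir]
      have hdp : depth o d r v h (parent o d r v h i hir) ≤ n := by
        have := (pe_spec o d r v h i hir).1
        omega
      by_cases hepe : e = pe o d r v h i hir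
      · have hz : pathflow o d r v h (parent o d r v h i hir) e = 0 := by
          by_contra hnz
          obtain ⟨j, hj, hej, hdj⟩ :=
            pathflow_support o d r v h n (parent o d r v h i hir) hdp e hnz
          have hij : i = j := pe_inj o d r v h hir hj (hepe.symm.trans hej)
          subst hij
          have := (pe_spec o d r v h i hir).1
          omega
        rw [hz, zero_add, if_pos hepe]
        split <;> norm_num
      · rw [if_neg hepe, add_zero]
        exact ih _ hdp e

/-- Net inflow. -/
def net (f : E → ℝ) (i : V) : ℝ :=
  (∑ e ∈ Finset.univ.filter (fun e => d e = i), f e) -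
    ∑ e ∈ Finset.univ.filter (fun e => o e = i), f e

lemma net_add (f g : E → ℝ) (i : V) :
    net o d (fun e => f e + g e) i = net o d f i + net o d g i := by
  unfold net
  rw [Finset.sum_add_distrib, Finset.sum_add_distrib]
  ring

lemma net_single (e0 : E) (c : ℝ) (i : V) :
    net o d (fun e => if e = e0 then c else 0) i =
      (if d e0 = i then c else 0) - (if o e0 = i then c else 0) := by
  unfold net
  rw [Finset.sum_ite_eq' (Finset.univ.filter (fun e => d e = i)) e0 (fun _ => c),
    Finset.sum_ite_eq' (Finset.univ.filter (fun e => o e = i)) e0 (fun _ => c)]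
  simp

lemma pathflow_net (h : ∀ i, ∃ n, StepsN o d r v n i) :
    ∀ (n : ℕ) (i : V), depth o d r v h i ≤ n → ∀ k,
      net o d (pathflow o d r v h i) k =
        (if k = i then 1 else 0) - (if k = r then 1 else 0) := by
  intro n
  induction n with
  | zero =>
    intro i hdi k
    have hir : i = r := depth_eq_zero o d r v h (Nat.le_zero.mp hdi)
    subst hir
    rw [pathflow, dif_pos rfl]
    simp [net]
  | succ n ih =>
    intro i hdi k
    by_cases hir : i = r
    · subst hir
      rw [pathflow, dif_pos rfl]
      simp [net]
    · rw [pathflow, dif_neg hir]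
      have hdp : depth o d r v h (parent o d r v h i hir) ≤ n := by
        have := (pe_spec o d r v h i hir).1
        omega
      rw [net_add o d]
      rw [ih _ hdp k, net_single o d]
      rcases (pe_spec o d r v h i hir).2.2 with ⟨ho1, hd1⟩ | ⟨ho1, hd1⟩
      · rw [hd1, if_pos rfl, ho1]
        have e1 : (i = k) = (k = i) := propext eq_comm
        have e2 : (parent o d r v h i hir = k) = (k = parent o d r v h i hir) :=
          propext eq_comm
        simp only [e1, e2]
        ring
      · have hpi : parent o d r v h i hir ≠ i := by
          intro hcon
          have := (pe_spec o d r v h i hir).1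
          rw [hcon] at this
          omega
        rw [hd1, ho1, if_neg hpi]
        have e1 : (i = k) = (k = i) := propext eq_comm
        have e2 : (parent o d r v h i hir = k) = (k = parent o d r v h i hir) :=
          propext eq_comm
        have e3 : ∀ (c : Prop) [Decidable c], (if c then (-1 : ℝ) else 0) =
            -(if c then 1 else 0) := by
          intro c hc
          split <;> norm_num
        simp only [e1, e2, e3]
        ring

lemma pathflow_closed (h : ∀ i, ∃ n, StepsN o d r v n i) (i : V) (e : E)
    (hve : v e = 0) : pathflow o d r v h i e = 0 := by
  by_contra hnz
  obtain ⟨j, hj, hej, _⟩ :=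
    pathflow_support o d r v h (depth o d r v h i) i (le_refl _) e hnz
  have := (pe_spec o d r v h j hj).2.1
  rw [← hej] at this
  rw [hve] at this
  norm_num at this

end Stmt8Aux

/-- The virtual-flow constraints (5)-(6) are feasible if and only if the branch
openings leave the network connected (every bus connected to the reference `r` via
closed branches). -/
theorem stmt_8 {V E : Type*} [Fintype V] [Fintype E] [DecidableEq V]
    (o d : E → V) (r : V) (v : E → ℝ)
    (hv : ∀ e, v e = 0 ∨ v e = 1) :
    (∃ f : E → ℝ,
      (∀ i : V,
        ∑ e ∈ Finset.univ.filter (fun e => d e = i), f e =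
          (if i = r then 1 - (Fintype.card V : ℝ) else 1) +
            ∑ e ∈ Finset.univ.filter (fun e => o e = i), f e) ∧
      (∀ e : E, |f e| ≤ v e * (Fintype.card V : ℝ))) ↔
    (∀ i : V, Relation.ReflTransGen
      (fun a b => ∃ e, v e = 1 ∧ ((o e = a ∧ d e = b) ∨ (o e = b ∧ d e = a))) r i) := by
  classical
  constructor
  · rintro ⟨f, hcons, hbound⟩ i0
    by_contra hni
    set Reach : V → Prop := fun i => Relation.ReflTransGen
      (fun a b => ∃ e, v e = 1 ∧ ((o e = a ∧ d e = b) ∨ (o e = b ∧ d e = a))) r i with hR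
    set S : Finset V := Finset.univ.filter (fun i => ¬ Reach i) with hS
    have hi0 : i0 ∈ S := by
      simp only [hS, Finset.mem_filter, Finset.mem_univ, true_and]
      exact hni
    have hrS : r ∉ S := by simp [hS]; exact Relation.ReflTransGen.refl
    -- if one endpoint of a branch is reachable and the other is not, it is open
    have hzero1 : ∀ e, d e ∈ S → o e ∉ S → f e = 0 := by
      intro e hde hoe
      have hro : Reach (o e) := by simpa [hS] using hoe
      have hrd : ¬ Reach (d e) := by simpa [hS] using hde
      have hve : v e = 0 := by
        rcases hv e with h0 | h1
        · exact h0
        · exact absurd (hro.tail ⟨e, h1, Or.inl ⟨rfl, rfl⟩⟩) hrd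
      have := hbound e
      rw [hve, zero_mul] at this
      exact abs_nonpos_iff.mp this
    have hzero2 : ∀ e, o e ∈ S → d e ∉ S → f e = 0 := by
      intro e hoe hde
      have hrd : Reach (d e) := by simpa [hS] using hde
      have hro : ¬ Reach (o e) := by simpa [hS] using hoe
      have hve : v e = 0 := by
        rcases hv e with h0 | h1
        · exact h0
        · exact absurd (hrd.tail ⟨e, h1, Or.inr ⟨rfl, rfl⟩⟩) hro
      have := hbound e
      rw [hve, zero_mul] at this
      exact abs_nonpos_iff.mp this
    -- sum the conservation constraints26 over S
    have hsum : ∑ k ∈ S, (∑ e ∈ Finset.univ.filter (fun e => d e = k), f e) =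
        ∑ k ∈ S, ((if k = r then 1 - (Fintype.card V : ℝ) else 1) +
          ∑ e ∈ Finset.univ.filter (fun e => o e = k), f e) :=
      Finset.sum_congr rfl fun k _ => hcons k
    rw [Finset.sum_add_distrib, Finset.sum_fiberwise_eq_sum_filter Finset.univ S d f,
      Finset.sum_fiberwise_eq_sum_filter Finset.univ S o f] at hsum
    have hdelta : ∑ k ∈ S, (if k = r then 1 - (Fintype.card V : ℝ) else 1) = (S.card : ℝ) := by
      rw [Finset.sum_congr rfl (fun k hk => if_neg (by rintro rfl; exact hrS hk))]
      simp
    rw [hdelta] at hsum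
    have h1 : ∑ e ∈ Finset.univ.filter (fun e => d e ∈ S), f e =
        ∑ e ∈ Finset.univ.filter (fun e => d e ∈ S ∧ o e ∈ S), f e := by
      symm
      apply Finset.sum_subset
      · intro e he
        simp only [Finset.mem_filter, Finset.mem_univ, true_and] at he ⊢
        exact he.1
      · intro e he hne
        simp only [Finset.mem_filter, Finset.mem_univ, true_and] at he hne
        exact hzero1 e he fun hc => hne ⟨he, hc⟩
    have h2 : ∑ e ∈ Finset.univ.filter (fun e => o e ∈ S), f e =
        ∑ e ∈ Finset.univ.filter (fun e => d e ∈ S ∧ o e ∈ S), f e := by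
      symm
      apply Finset.sum_subset
      · intro e he
        simp only [Finset.mem_filter, Finset.mem_univ, true_and] at he ⊢
        exact he.2
      · intro e he hne
        simp only [Finset.mem_filter, Finset.mem_univ, true_and] at he hne
        exact hzero2 e he fun hc => hne ⟨hc, he⟩
    rw [h1, h2] at hsum
    have hcard : (S.card : ℝ) = 0 := by linarith
    have : S.card = 0 := by exact_mod_cast hcard
    rw [Finset.card_eq_zero] at this
    rw [this] at hi0
    exact absurd hi0 (Finset.notMem_empty i0)
  · intro hreach
    have h : ∀ i, ∃ n, Stmt8Aux.StepsN o d r v n i := fun i =>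
      Stmt8Aux.exists_stepsN (hreach i)
    refine ⟨fun e => ∑ i : V, Stmt8Aux.pathflow o d r v h i e, ?_, ?_⟩
    · intro k
      have hnet : ∀ i : V, Stmt8Aux.net o d (Stmt8Aux.pathflow o d r v h i) k =
          (if k = i then 1 else 0) - (if k = r then 1 else 0) := fun i =>
        Stmt8Aux.pathflow_net o d r v h (Stmt8Aux.depth o d r v h i) i (le_refl _) k
      have hswap : ∑ i : V, Stmt8Aux.net o d (Stmt8Aux.pathflow o d r v h i) k =
          (∑ e ∈ Finset.univ.filter (fun e => d e = k),
            ∑ i : V, Stmt8Aux.pathflow o d r v h i e) -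
          ∑ e ∈ Finset.univ.filter (fun e => o e = k),
            ∑ i : V, Stmt8Aux.pathflow o d r v h i e := by
        unfold Stmt8Aux.net
        rw [Finset.sum_sub_distrib, Finset.sum_comm, Finset.sum_comm
          (s := Finset.univ) (t := Finset.univ.filter (fun e => o e = k))]
      have hval : ∑ i : V, ((if k = i then (1 : ℝ) else 0) - (if k = r then 1 else 0)) =
          1 - (Fintype.card V : ℝ) * (if k = r then 1 else 0) := by
        rw [Finset.sum_sub_distrib, Finset.sum_ite_eq Finset.univ k (fun _ => (1 : ℝ)),
          Finset.sum_const]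
        simp [mul_comm]
      have := hswap.symm.trans ((Finset.sum_congr rfl fun i _ => hnet i).trans hval)
      by_cases hk : k = r
      · rw [if_pos hk] at this ⊢
        rw [mul_one] at this
        linarith
      · rw [if_neg hk] at this ⊢
        rw [mul_zero] at this
        linarith
    · intro e
      show |∑ i : V, Stmt8Aux.pathflow o d r v h i e| ≤ v e * (Fintype.card V : ℝ)
      rcases hv e with h0 | h1
      · have : ∀ i : V, Stmt8Aux.pathflow o d r v h i e = 0 := fun i =>
          Stmt8Aux.pathflow_closed o d r v h i e h0
        rw [Finset.sum_congr rfl fun i _ => this i]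
        simp [h0]
      · rw [h1, one_mul]
        calc |∑ i : V, Stmt8Aux.pathflow o d r v h i e|
            ≤ ∑ i : V, |Stmt8Aux.pathflow o d r v h i e| :=
              Finset.abs_sum_le_sum_abs _ _
          _ ≤ ∑ _i : V, (1 : ℝ) := Finset.sum_le_sum fun i _ =>
              Stmt8Aux.pathflow_bound o d r v h (Stmt8Aux.depth o d r v h i) i (le_refl _) e
          _ = (Fintype.card V : ℝ) := by simp
end

section
/- Let V be a finite set of buses with reference bus r, E a finite set of branches with endpoint maps o, d : E → V, and v : E → {0,1} a branch status such that every bus is connected to r via closed branches. Define δ : V → ℝ by δ(r) = 1 − |V| and δ(i) = 1 for i ≠ r. Then there exists f : E → ℝ with f(e) = 0 for every open branch e, |f(e)| ≤ |V| − 1 for every branch e, and Σ_{e : d(e) = i} f(e) = δ(i) + Σ_{e : o(e) = i} f(e) for every bus i. -/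
set_option linter.unusedSectionVars false
set_option maxHeartbeats 1000000

namespace Stmt9


open Finset

lemma rtg_comp {α : Type*} {s : α → α → Prop} (hdet : ∀ x y z, s x y → s x z → y = z)
    {j a : α} (hja : Relation.ReflTransGen s j a) :
    ∀ b, Relation.ReflTransGen s j b →
      Relation.ReflTransGen s a b ∨ Relation.ReflTransGen s b a := by
  induction hja using Relation.ReflTransGen.head_induction_on with
  | refl => exact fun b hjb => Or.inl hjb
  | head hstep htail ih =>
      intro b hjb
      rcases hjb.cases_head with rfl | ⟨m', hstep', htail'⟩
      · exact Or.inr (Relation.ReflTransGen.head hstep htail)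
      · exact ih b (hdet _ _ _ hstep' hstep ▸ htail')

variable {V : Type*} [Fintype V] [DecidableEq V]

def stp (r : V) (P : V → V) (a b : V) : Prop := a ≠ r ∧ P a = b

noncomputable def Dsc (r : V) (P : V → V) (i : V) : Finset V :=
  @Finset.filter _ (fun j => Relation.ReflTransGen (stp r P) j i)
    (Classical.decPred _) Finset.univ

lemma mem_Dsc {r : V} {P : V → V} {i j : V} :
    j ∈ Dsc r P i ↔ Relation.ReflTransGen (stp r P) j i := by
  simp [Dsc]

noncomputable def cnt (r : V) (P : V → V) (i : V) : ℕ := (Dsc r P i).card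

lemma stp_det (r : V) (P : V → V) : ∀ x y z, stp r P x y → stp r P x z → y = z :=
  fun _ _ _ h1 h2 => h1.2 ▸ h2.2

variable {r : V} {P : V → V} {rk : V → ℕ} (hrk : ∀ i, i ≠ r → rk (P i) < rk i)

include hrk

lemma rk_le_of_rtg {j i : V} (h : Relation.ReflTransGen (stp r P) j i) : rk i ≤ rk j := by
  induction h with
  | refl => exact le_rfl
  | tail hb hbc ih => exact le_trans (le_of_lt (hbc.2 ▸ hrk _ hbc.1)) ih

lemma not_back {k i : V} (hki : stp r P k i) (hik : Relation.ReflTransGen (stp r P) i k) :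
    False := by
  have h1 : rk k ≤ rk i := rk_le_of_rtg hrk hik
  have h2 : rk i < rk k := hki.2 ▸ hrk _ hki.1
  omega

lemma Dsc_decomp (i : V) :
    Dsc r P i = insert i ((Finset.univ.filter
      (fun j => ¬ j = r ∧ P j = i)).biUnion (fun k => Dsc r P k)) := by
  classical
  ext j
  simp only [mem_Dsc, Finset.mem_insert, Finset.mem_biUnion, Finset.mem_filter,
    Finset.mem_univ, true_and]
  constructor
  · intro hj
    rcases hj.cases_tail with rfl | ⟨k, hjk, hki⟩
    · exact Or.inl rfl
    · exact Or.inr ⟨k, ⟨hki.1, hki.2⟩, hjk⟩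
  · rintro (rfl | ⟨k, ⟨hk1, hk2⟩, hj⟩)
    · exact Relation.ReflTransGen.refl
    · exact hj.tail ⟨hk1, hk2⟩

lemma cnt_decomp (i : V) :
    cnt r P i = 1 + ∑ k ∈ Finset.univ.filter (fun j => ¬ j = r ∧ P j = i), cnt r P k := by
  classical
  have hnot : i ∉ (Finset.univ.filter
      (fun j => ¬ j = r ∧ P j = i)).biUnion (fun k => Dsc r P k) := by
    simp only [Finset.mem_biUnion, Finset.mem_filter, Finset.mem_univ, true_and]
    rintro ⟨k, ⟨hk1, hk2⟩, hik⟩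
    exact not_back hrk ⟨hk1, hk2⟩ (mem_Dsc.1 hik)
  have hdisj : ∀ k1 ∈ Finset.univ.filter (fun j => ¬ j = r ∧ P j = i),
      ∀ k2 ∈ Finset.univ.filter (fun j => ¬ j = r ∧ P j = i), k1 ≠ k2 →
      Disjoint (Dsc r P k1) (Dsc r P k2) := by
    simp only [Finset.mem_filter, Finset.mem_univ, true_and]
    rintro k1 ⟨hk1r, hk1P⟩ k2 ⟨hk2r, hk2P⟩ hne
    rw [Finset.disjoint_left]
    intro j hj1 hj2
    have hj1 := mem_Dsc.1 hj1
    have hj2 := mem_Dsc.1 hj2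
    have key : ∀ a b : V, a ≠ r → P a = i → b ≠ r → P b = i →
        Relation.ReflTransGen (stp r P) a b → a = b := by
      intro a b har haP hbr hbP hab
      rcases hab.cases_head with rfl | ⟨m, hstep, htail⟩
      · rfl
      · have hm : m = i := hstep.2.symm.trans haP
        subst hm
        exact absurd (not_back hrk ⟨hbr, hbP⟩ htail) not_false
    rcases rtg_comp (stp_det r P) hj1 _ hj2 with h | h
    · exact hne (key _ _ hk1r hk1P hk2r hk2P h)
    · exact hne (key _ _ hk2r hk2P hk1r hk1P h).symm
  rw [cnt, Dsc_decomp hrk i, Finset.card_insert_of_notMem hnot,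
    Finset.card_biUnion hdisj, add_comm]
  rfl

lemma rtg_to_root (j : V) : Relation.ReflTransGen (stp r P) j r := by
  have H : ∀ n (j : V), rk j ≤ n → Relation.ReflTransGen (stp r P) j r := by
    intro n
    induction n with
    | zero =>
        intro j hj
        by_cases h : j = r
        · exact h ▸ Relation.ReflTransGen.refl
        · exact absurd (hrk j h) (by omega)
    | succ n ih =>
        intro j hj
        by_cases h : j = r
        · exact h ▸ Relation.ReflTransGen.refl
        · exact Relation.ReflTransGen.head ⟨h, rfl⟩ (ih _ (by have := hrk j h; omega))
  exact H (rk j) j le_rfl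

lemma cnt_root : cnt r P r = Fintype.card V := by
  rw [cnt]
  have : Dsc r P r = Finset.univ := by
    ext j; simp [mem_Dsc, rtg_to_root hrk]
  rw [this, Finset.card_univ]

omit hrk

lemma cnt_pos (i : V) : 1 ≤ cnt r P i :=
  Finset.card_pos.2 ⟨i, mem_Dsc.2 Relation.ReflTransGen.refl⟩

lemma cnt_le (i : V) (hi : i ≠ r) : cnt r P i ≤ Fintype.card V - 1 := by
  have hsub : Dsc r P i ⊆ Finset.univ.erase r := by
    intro j hj
    rcases (mem_Dsc.1 hj).cases_head with rfl | ⟨m, hstep, _⟩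
    · exact Finset.mem_erase.2 ⟨hi, Finset.mem_univ _⟩
    · exact Finset.mem_erase.2 ⟨hstep.1, Finset.mem_univ _⟩
  calc cnt r P i ≤ (Finset.univ.erase r).card := Finset.card_le_card hsub
    _ = Fintype.card V - 1 := by rw [Finset.card_erase_of_mem (Finset.mem_univ r), Finset.card_univ]



variable {V E : Type*}

def reachIn (o d : E → V) (v : E → ℝ) (r : V) : ℕ → V → Prop
  | 0, i => i = r
  | n+1, i => ∃ b, reachIn o d v r n b ∧
      ∃ e, v e = 1 ∧ ((o e = b ∧ d e = i) ∨ (o e = i ∧ d e = b))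

lemma reach_exists (o d : E → V) (v : E → ℝ) (r i : V)
    (h : Relation.ReflTransGen
      (fun a b => ∃ e, v e = 1 ∧ ((o e = a ∧ d e = b) ∨ (o e = b ∧ d e = a))) r i) :
    ∃ n, reachIn o d v r n i := by
  induction h with
  | refl => exact ⟨0, rfl⟩
  | tail hb hbc ih =>
      obtain ⟨n, hn⟩ := ih
      exact ⟨n + 1, _, hn, hbc⟩

noncomputable def rank (o d : E → V) (v : E → ℝ) (r i : V) : ℕ :=
  sInf {n | reachIn o d v r n i}

lemma rank_spec (o d : E → V) (v : E → ℝ) (r i : V)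
    (hex : ∀ j, ∃ n, reachIn o d v r n j) (hi : i ≠ r) :
    ∃ e b, v e = 1 ∧ ((o e = b ∧ d e = i) ∨ (o e = i ∧ d e = b)) ∧
      rank o d v r b < rank o d v r i := by
  have hmem : reachIn o d v r (rank o d v r i) i := Nat.sInf_mem (hex i)
  have hne : rank o d v r i ≠ 0 := by
    intro h0
    rw [h0] at hmem
    exact hi hmem
  obtain ⟨m, hm⟩ := Nat.exists_eq_succ_of_ne_zero hne
  rw [hm] at hmem
  simp only [reachIn] at hmem
  obtain ⟨b, hb, e, hve, hor⟩ := hmem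
  refine ⟨e, b, hve, hor, ?_⟩
  have : rank o d v r b ≤ m := Nat.sInf_le hb
  omega


end Stmt9

/-- Constructive direction of the virtual-flow claim: if the closed-branch subgraph
spans the network, there is a feasible virtual flow that vanishes on open branches and
is bounded in magnitude by `|V| - 1`. -/
theorem stmt_9 {V E : Type*} [Fintype V] [Fintype E] [DecidableEq V]
    (o d : E → V) (r : V) (v : E → ℝ)
    (hv : ∀ e, v e = 0 ∨ v e = 1)
    (hspan : ∀ i : V, Relation.ReflTransGen
      (fun a b => ∃ e, v e = 1 ∧ ((o e = a ∧ d e = b) ∨ (o e = b ∧ d e = a))) r i) :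
    ∃ f : E → ℝ,
      (∀ e : E, v e = 0 → f e = 0) ∧
      (∀ e : E, |f e| ≤ (Fintype.card V : ℝ) - 1) ∧
      (∀ i : V,
        ∑ e ∈ Finset.univ.filter (fun e => d e = i), f e =
          (if i = r then 1 - (Fintype.card V : ℝ) else 1) +
            ∑ e ∈ Finset.univ.filter (fun e => o e = i), f e) := by
  classical
  have hex : ∀ j, ∃ n, Stmt9.reachIn o d v r n j :=
    fun j => Stmt9.reach_exists o d v r j (hspan j)
  set rk : V → ℕ := Stmt9.rank o d v r with hrk_def
  have key : ∀ i, i ≠ r → ∃ e b, v e = 1 ∧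
      ((o e = b ∧ d e = i) ∨ (o e = i ∧ d e = b)) ∧ rk b < rk i :=
    fun i hi => Stmt9.rank_spec o d v r i hex hi
  choose ed pa h1 h2 h3 using key
  obtain ⟨P, hPr, hPne⟩ : ∃ P : V → V, P r = r ∧ ∀ i (h : i ≠ r), P i = pa i h :=
    ⟨fun i => if h : i = r then r else pa i h, dif_pos rfl, fun i h => dif_neg h⟩
  have hrkP : ∀ i, i ≠ r → rk (P i) < rk i := fun i h => by
    rw [hPne i h]; exact h3 i h
  set c : V → ℕ := Stmt9.cnt r P with hc_def
  have hpane : ∀ j (h : j ≠ r), pa j h ≠ j := by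
    intro j h heq
    have := h3 j h
    rw [heq] at this
    omega
  obtain ⟨g, hgr, hgne⟩ : ∃ g : V → E → ℝ, (∀ e, g r e = 0) ∧
      ∀ i (h : i ≠ r) e, g i e =
        if ed i h = e then (if o e = i then -(c i : ℝ) else (c i : ℝ)) else 0 :=
    ⟨fun i e => if h : i = r then 0
      else if ed i h = e then (if o e = i then -(c i : ℝ) else (c i : ℝ)) else 0,
      fun e => dif_pos rfl, fun i h e => dif_neg h⟩
  have hinj : ∀ j1 j2 (hj1 : j1 ≠ r) (hj2 : j2 ≠ r), ed j1 hj1 = ed j2 hj2 → j1 = j2 := by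
    intro j1 j2 hj1 hj2 heq
    have H1 := h2 j1 hj1
    have H2 := h2 j2 hj2
    rw [← heq] at H2
    rcases H1 with ⟨ho1, hd1⟩ | ⟨ho1, hd1⟩ <;> rcases H2 with ⟨ho2, hd2⟩ | ⟨ho2, hd2⟩
    · exact hd1.symm.trans hd2
    · exfalso
      have e1 : pa j1 hj1 = j2 := ho1.symm.trans ho2
      have e2 : j1 = pa j2 hj2 := hd1.symm.trans hd2
      have t1 := h3 j1 hj1
      have t2 := h3 j2 hj2
      rw [e1] at t1
      rw [← e2] at t2
      omega
    · exfalso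
      have e1 : j1 = pa j2 hj2 := ho1.symm.trans ho2
      have e2 : pa j1 hj1 = j2 := hd1.symm.trans hd2
      have t1 := h3 j1 hj1
      have t2 := h3 j2 hj2
      rw [e2] at t1
      rw [← e1] at t2
      omega
    · exact ho1.symm.trans ho2
  have hcardV : 1 ≤ Fintype.card V := Fintype.card_pos_iff.2 ⟨r⟩
  have hcle : ∀ j, j ≠ r → (c j : ℝ) ≤ (Fintype.card V : ℝ) - 1 := by
    intro j hj
    have h := Stmt9.cnt_le (r := r) (P := P) j hj
    calc (c j : ℝ) ≤ ((Fintype.card V - 1 : ℕ) : ℝ) := Nat.cast_le.2 h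
      _ = (Fintype.card V : ℝ) - 1 := by rw [Nat.cast_sub hcardV, Nat.cast_one]
  refine ⟨fun e => ∑ i, g i e, ?_, ?_, ?_⟩
  · -- vanishes on open branches
    intro e he
    apply Finset.sum_eq_zero
    intro j _
    by_cases hj : j = r
    · rw [hj]; exact hgr e
    · rw [hgne j hj e, if_neg]
      intro heq
      rw [← heq, h1 j hj] at he
      norm_num at he
  · -- bound
    intro e
    show |∑ i, g i e| ≤ (Fintype.card V : ℝ) - 1
    by_cases hE : ∃ j, ∃ hj : j ≠ r, ed j hj = e
    · obtain ⟨j0, hj0, hje⟩ := hE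
      have hone : ∑ i, g i e = g j0 e := by
        apply Finset.sum_eq_single j0
        · intro j _ hne
          by_cases hj : j = r
          · rw [hj]; exact hgr e
          · rw [hgne j hj e, if_neg]
            intro heq
            exact hne (hinj j j0 hj hj0 (heq.trans hje.symm))
        · intro h
          exact absurd (Finset.mem_univ j0) h
      rw [hone, hgne j0 hj0 e, if_pos hje]
      have hc0 : (0 : ℝ) ≤ (c j0 : ℝ) := Nat.cast_nonneg _
      split
      · rw [abs_neg, abs_of_nonneg hc0]
        exact hcle j0 hj0
      · rw [abs_of_nonneg hc0]
        exact hcle j0 hj0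
    · have hzero : ∑ i, g i e = 0 := by
        apply Finset.sum_eq_zero
        intro j _
        by_cases hj : j = r
        · rw [hj]; exact hgr e
        · rw [hgne j hj e, if_neg (fun heq => hE ⟨j, hj, heq⟩)]
      rw [hzero, abs_zero]
      have : (1 : ℝ) ≤ (Fintype.card V : ℝ) := by exact_mod_cast hcardV
      linarith
  · -- conservation
    intro i
    show ∑ e ∈ Finset.univ.filter (fun e => d e = i), ∑ j, g j e =
      (if i = r then 1 - (Fintype.card V : ℝ) else 1) +
        ∑ e ∈ Finset.univ.filter (fun e => o e = i), ∑ j, g j e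
    have hsumg : ∀ (s : Finset E) (j : V) (hj : j ≠ r),
        ∑ e ∈ s, g j e = if ed j hj ∈ s then
          (if o (ed j hj) = j then -(c j : ℝ) else (c j : ℝ)) else 0 := by
      intro s j hj
      rw [Finset.sum_congr rfl (fun e _ => hgne j hj e)]
      exact Finset.sum_ite_eq s (ed j hj) _
    have main : ∀ j : V,
        (∑ e ∈ Finset.univ.filter (fun e => d e = i), g j e) -
          (∑ e ∈ Finset.univ.filter (fun e => o e = i), g j e) =
        if j = r then 0 else
          ((if j = i then (c j : ℝ) else 0) - (if P j = i then (c j : ℝ) else 0)) := by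
      intro j
      by_cases hj : j = r
      · rw [if_pos hj, hj]
        simp [hgr]
      · rw [if_neg hj, hsumg _ j hj, hsumg _ j hj, hPne j hj]
        simp only [Finset.mem_filter, Finset.mem_univ, true_and]
        rcases h2 j hj with ⟨ho, hd⟩ | ⟨ho, hd⟩
        · have hw : (if o (ed j hj) = j then -(c j : ℝ) else (c j : ℝ)) = (c j : ℝ) := by
            rw [ho]; exact if_neg (hpane j hj)
          rw [hw, hd, ho]
        · have hw : (if o (ed j hj) = j then -(c j : ℝ) else (c j : ℝ)) = -(c j : ℝ) := by
            rw [ho]; exact if_pos rfl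
          rw [hw, hd, ho]
          split_ifs <;> ring
    have hL : ∑ e ∈ Finset.univ.filter (fun e => d e = i), ∑ j, g j e =
        ∑ j, ∑ e ∈ Finset.univ.filter (fun e => d e = i), g j e := Finset.sum_comm
    have hR : ∑ e ∈ Finset.univ.filter (fun e => o e = i), ∑ j, g j e =
        ∑ j, ∑ e ∈ Finset.univ.filter (fun e => o e = i), g j e := Finset.sum_comm
    rw [hL, hR]
    have hkey : (∑ j, ∑ e ∈ Finset.univ.filter (fun e => d e = i), g j e) -
        (∑ j, ∑ e ∈ Finset.univ.filter (fun e => o e = i), g j e) =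
        (if i = r then 1 - (Fintype.card V : ℝ) else 1) := by
      rw [← Finset.sum_sub_distrib, Finset.sum_congr rfl (fun j _ => main j)]
      have step1 : ∑ j : V, (if j = r then (0:ℝ) else
          ((if j = i then (c j : ℝ) else 0) - (if P j = i then (c j : ℝ) else 0))) =
          ∑ j ∈ Finset.univ.filter (fun j => ¬ j = r),
            ((if j = i then (c j : ℝ) else 0) - (if P j = i then (c j : ℝ) else 0)) := by
        rw [Finset.sum_filter]
        apply Finset.sum_congr rfl
        intro j _
        by_cases hj : j = r <;> simp [hj]
      rw [step1, Finset.sum_sub_distrib]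
      have sA : ∑ j ∈ Finset.univ.filter (fun j => ¬ j = r),
          (if j = i then (c j : ℝ) else 0) = if i = r then 0 else (c i : ℝ) := by
        rw [Finset.sum_ite_eq' (Finset.univ.filter (fun j => ¬ j = r)) i
          (fun j => (c j : ℝ))]
        by_cases hi : i = r <;> simp [hi]
      have sB : ∑ j ∈ Finset.univ.filter (fun j => ¬ j = r),
          (if P j = i then (c j : ℝ) else 0) = (c i : ℝ) - 1 := by
        rw [← Finset.sum_filter, Finset.filter_filter]
        have hdec := Stmt9.cnt_decomp hrkP i
        have : ((c i : ℝ)) = 1 + ∑ k ∈ Finset.univ.filter (fun j => ¬ j = r ∧ P j = i),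
            (c k : ℝ) := by
          rw [hc_def]
          exact_mod_cast hdec
        rw [this]
        ring
      rw [sA, sB]
      by_cases hi : i = r
      · rw [if_pos hi, if_pos hi, hi]
        have : (c r : ℝ) = (Fintype.card V : ℝ) := by
          rw [hc_def]
          exact_mod_cast Stmt9.cnt_root hrkP
        rw [this]
        ring
      · rw [if_neg hi, if_neg hi]
        ring
    linarith
end

section
/- Let V be a finite set of buses, E a finite set of branches with endpoint maps o, d : E → V, let p̄g, p̄d : V → ℝ be base generation and load, σ ∈ ℝ, and f : E → ℝ a flow. Let S ⊆ V be such that σ·p̄g(i) + Σ_{e : d(e) = i} f(e) = p̄d(i) + Σ_{e : o(e) = i} f(e) holds for every i ∈ S, and f(e) = 0 for every branch e with exactly one endpoint in S. If Σ_{i∈S} p̄g(i) ≠ 0, then σ = (Σ_{i∈S} p̄d(i)) / (Σ_{i∈S} p̄g(i)). -/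
/-- Section II-D claim: power balance in the energized area `S` forces the rescaling
factor `σ` to equal the ratio of total load to total generation in `S`. -/
theorem stmt_11 {V E : Type*} [Fintype V] [Fintype E] [DecidableEq V]
    (o d : E → V) (pg pd : V → ℝ) (σ : ℝ) (f : E → ℝ) (S : Finset V)
    (hkcl : ∀ i ∈ S,
      σ * pg i + ∑ e ∈ Finset.univ.filter (fun e => d e = i), f e =
        pd i + ∑ e ∈ Finset.univ.filter (fun e => o e = i), f e)
    (hcut : ∀ e : E, ((o e ∈ S ∧ d e ∉ S) ∨ (d e ∈ S ∧ o e ∉ S)) → f e = 0)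
    (hg : ∑ i ∈ S, pg i ≠ 0) :
    σ = (∑ i ∈ S, pd i) / (∑ i ∈ S, pg i) := by
  classical
  have hsum := Finset.sum_congr rfl hkcl
  rw [Finset.sum_add_distrib, Finset.sum_add_distrib,
    Finset.sum_fiberwise_eq_sum_filter Finset.univ S d f,
    Finset.sum_fiberwise_eq_sum_filter Finset.univ S o f] at hsum
  have hflow : ∑ e ∈ Finset.univ.filter (fun e => d e ∈ S), f e =
      ∑ e ∈ Finset.univ.filter (fun e => o e ∈ S), f e := by
    rw [← Finset.sum_filter_add_sum_filter_not (Finset.univ.filter (fun e => d e ∈ S))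
        (fun e => o e ∈ S) f,
      ← Finset.sum_filter_add_sum_filter_not (Finset.univ.filter (fun e => o e ∈ S))
        (fun e => d e ∈ S) f]
    have h1 : ∑ e ∈ (Finset.univ.filter (fun e => d e ∈ S)).filter (fun e => ¬ o e ∈ S), f e = 0 := by
      apply Finset.sum_eq_zero
      intro e he
      simp only [Finset.mem_filter] at he
      exact hcut e (Or.inr ⟨he.1.2, he.2⟩)
    have h2 : ∑ e ∈ (Finset.univ.filter (fun e => o e ∈ S)).filter (fun e => ¬ d e ∈ S), f e = 0 := by
      apply Finset.sum_eq_zero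
      intro e he
      simp only [Finset.mem_filter] at he
      exact hcut e (Or.inl ⟨he.1.2, he.2⟩)
    rw [h1, h2, add_zero, add_zero]
    apply Finset.sum_congr _ (fun _ _ => rfl)
    ext e
    simp only [Finset.mem_filter]
    tauto
  rw [hflow] at hsum
  have key : σ * ∑ i ∈ S, pg i = ∑ i ∈ S, pd i := by
    have := add_right_cancel hsum
    rw [← Finset.mul_sum] at this
    exact this
  field_simp
  linarith [key]
end

section
/- Let V be a finite set of buses, E a finite set of branches with endpoint maps o, d : E → V, let p̄g, p̄d : V → ℝ, σ ∈ ℝ, π : V → ℝ, and f : E → ℝ. Let S ⊆ V be such that: π is constant on S with common value t; π(i)·σ·p̄g(i) + Σ_{e : d(e) = i} f(e) = π(i)·p̄d(i) + Σ_{e : o(e) = i} f(e) holds for every i ∈ S; and f(e) = 0 for every branch e with exactly one endpoint in S. If p̄g(i) = 0 for all i ∈ S and Σ_{i∈S} p̄d(i) ≠ 0, then t = 0. -/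
/-- Section II-D argument: if a de-energized area `S` contains only loads (no
generation) and its total load is nonzero, the power-balance equation forces its common
energization value to zero. -/
theorem stmt_12 {V E : Type*} [Fintype V] [Fintype E] [DecidableEq V]
    (o d : E → V) (pg pd : V → ℝ) (σ : ℝ) (π : V → ℝ) (f : E → ℝ)
    (S : Finset V) (t : ℝ)
    (hconst : ∀ i ∈ S, π i = t)
    (hkcl : ∀ i ∈ S,
      π i * σ * pg i + ∑ e ∈ Finset.univ.filter (fun e => d e = i), f e =
        π i * pd i + ∑ e ∈ Finset.univ.filter (fun e => o e = i), f e)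
    (hcut : ∀ e : E, ((o e ∈ S ∧ d e ∉ S) ∨ (d e ∈ S ∧ o e ∉ S)) → f e = 0)
    (hnogen : ∀ i ∈ S, pg i = 0)
    (hload : ∑ i ∈ S, pd i ≠ 0) :
    t = 0 := by
  have hsum := Finset.sum_congr rfl hkcl
  have hd : ∑ i ∈ S, ∑ e ∈ Finset.univ.filter (fun e => d e = i), f e =
      ∑ e ∈ Finset.univ.filter (fun e => d e ∈ S), f e :=
    Finset.sum_fiberwise_eq_sum_filter Finset.univ S d f
  have ho : ∑ i ∈ S, ∑ e ∈ Finset.univ.filter (fun e => o e = i), f e =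
      ∑ e ∈ Finset.univ.filter (fun e => o e ∈ S), f e :=
    Finset.sum_fiberwise_eq_sum_filter Finset.univ S o f
  have hAB : ∑ e ∈ Finset.univ.filter (fun e => d e ∈ S), f e =
      ∑ e ∈ Finset.univ.filter (fun e => o e ∈ S), f e := by
    rw [← Finset.sum_filter_add_sum_filter_not (Finset.univ.filter (fun e => d e ∈ S))
        (fun e => o e ∈ S) f,
      ← Finset.sum_filter_add_sum_filter_not (Finset.univ.filter (fun e => o e ∈ S))
        (fun e => d e ∈ S) f]
    have h1 : ∑ e ∈ (Finset.univ.filter (fun e => d e ∈ S)).filter (fun e => ¬ o e ∈ S),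
        f e = 0 := by
      apply Finset.sum_eq_zero; intro e he
      simp only [Finset.mem_filter] at he
      exact hcut e (Or.inr ⟨he.1.2, he.2⟩)
    have h2 : ∑ e ∈ (Finset.univ.filter (fun e => o e ∈ S)).filter (fun e => ¬ d e ∈ S),
        f e = 0 := by
      apply Finset.sum_eq_zero; intro e he
      simp only [Finset.mem_filter] at he
      exact hcut e (Or.inl ⟨he.1.2, he.2⟩)
    rw [h1, h2, add_zero, add_zero]
    apply Finset.sum_congr _ (fun _ _ => rfl)
    ext e; simp only [Finset.mem_filter]; tauto
  rw [Finset.sum_add_distrib, Finset.sum_add_distrib, hd, ho, hAB,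
    add_left_cancel_iff.mpr rfl] at hsum
  have hz : ∑ i ∈ S, π i * σ * pg i = 0 :=
    Finset.sum_eq_zero fun i hi => by rw [hnogen i hi, mul_zero]
  have hP : ∑ i ∈ S, π i * pd i = t * ∑ i ∈ S, pd i := by
    rw [Finset.mul_sum]
    exact Finset.sum_congr rfl fun i hi => by rw [hconst i hi]
  have : t * ∑ i ∈ S, pd i = 0 := by
    rw [← hP]; linarith [add_right_cancel hsum, hz]
  exact (mul_eq_zero.mp this).resolve_right hload
end

section
/- Let V be a finite set of buses, E a finite set of branches with endpoint maps o, d : E → V, let p̄g, p̄d : V → ℝ, σ ∈ ℝ, π : V → ℝ, and f : E → ℝ. Let S ⊆ V be such that: π is constant on S with common value t; π(i)·σ·p̄g(i) + Σ_{e : d(e) = i} f(e) = π(i)·p̄d(i) + Σ_{e : o(e) = i} f(e) holds for every i ∈ S; and f(e) = 0 for every branch e with exactly one endpoint in S. If t ≠ 0, then Σ_{i∈S} (σ·p̄g(i) − p̄d(i)) = 0, i.e. the rescaled generation and the load in S are perfectly balanced. -/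
/-- Section II-D claim: a non-identically-zero energization assignment on a
de-energized area `S` is possible only if the rescaled generation and loads in `S` are
perfectly balanced. -/
theorem stmt_13 {V E : Type*} [Fintype V] [Fintype E] [DecidableEq V]
    (o d : E → V) (pg pd : V → ℝ) (σ : ℝ) (π : V → ℝ) (f : E → ℝ)
    (S : Finset V) (t : ℝ)
    (hconst : ∀ i ∈ S, π i = t)
    (hkcl : ∀ i ∈ S,
      π i * σ * pg i + ∑ e ∈ Finset.univ.filter (fun e => d e = i), f e =
        π i * pd i + ∑ e ∈ Finset.univ.filter (fun e => o e = i), f e)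
    (hcut : ∀ e : E, ((o e ∈ S ∧ d e ∉ S) ∨ (d e ∈ S ∧ o e ∉ S)) → f e = 0)
    (ht : t ≠ 0) :
    ∑ i ∈ S, (σ * pg i - pd i) = 0 := by
  have hsum := Finset.sum_congr rfl hkcl
  rw [Finset.sum_add_distrib, Finset.sum_add_distrib] at hsum
  have hd : ∑ i ∈ S, ∑ e ∈ Finset.univ.filter (fun e => d e = i), f e =
      ∑ e ∈ Finset.univ.filter (fun e => d e ∈ S), f e := by
    simp only [Finset.sum_filter]
    rw [Finset.sum_comm]
    exact Finset.sum_congr rfl fun e _ => Finset.sum_ite_eq S (d e) (fun _ => f e)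
  have ho : ∑ i ∈ S, ∑ e ∈ Finset.univ.filter (fun e => o e = i), f e =
      ∑ e ∈ Finset.univ.filter (fun e => o e ∈ S), f e := by
    simp only [Finset.sum_filter]
    rw [Finset.sum_comm]
    exact Finset.sum_congr rfl fun e _ => Finset.sum_ite_eq S (o e) (fun _ => f e)
  have hod : ∑ e ∈ Finset.univ.filter (fun e => d e ∈ S), f e =
      ∑ e ∈ Finset.univ.filter (fun e => o e ∈ S), f e := by
    rw [Finset.sum_filter, Finset.sum_filter]
    apply Finset.sum_congr rfl
    intro e _
    by_cases hde : d e ∈ S <;> by_cases hoe : o e ∈ S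
    · simp [hde, hoe]
    · simp [hde, hoe, hcut e (Or.inr ⟨hde, hoe⟩)]
    · simp [hde, hoe, hcut e (Or.inl ⟨hoe, hde⟩)]
    · simp [hde, hoe]
  rw [hd, ho, hod] at hsum
  have h1 : ∑ i ∈ S, π i * σ * pg i = ∑ i ∈ S, π i * pd i := add_right_cancel hsum
  have h2 : t * ∑ i ∈ S, (σ * pg i - pd i) = 0 := by
    rw [Finset.mul_sum]
    have : ∀ i ∈ S, t * (σ * pg i - pd i) = π i * σ * pg i - π i * pd i := fun i hi => by
      rw [hconst i hi]; ring
    rw [Finset.sum_congr rfl this, Finset.sum_sub_distrib, h1, sub_self]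
  exact (mul_eq_zero.mp h2).resolve_left ht
end
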